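/- arXiv:1906.08337 — 3 statements merged into one kernel-verified Lean document; each statement's English description precedes it below -/
import Mathlib

section
/- Let P ⊆ ℝ^s be a closed convex set such that the collection of normal cones {N_P(y) : y ∈ P} is finite (e.g., P convex polyhedral). If {y_k} ⊆ P converges to ȳ and λ_k ∈ N_P(y_k) converges to λ̄, then there is a subsequence K ⊆ ℕ such that ⟨λ̄, y_k − ȳ⟩ = 0 for all k ∈ K. -/
/-! By pigeonhole, the normal cones `N_P(y_k)` coincide along a subsequence with a single cone.
The graph of the normal cone map is closed, so `λ̄` lies in that cone, i.e. in `N_P(y_k)` for every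
`k` of the subsequence, and then, letting `y_k → ȳ`, also in `N_P(ȳ)`. A vector normal to `P` at
two points `x, y ∈ P` is orthogonal to `x - y`. -/

open Set Filter Topology Metric

noncomputable section

/-- Normal cone of convex analysis: `N_P(y) = {z* | ⟨z*, v - y⟩ ≤ 0 ∀ v ∈ P}`. -/
def convNormal {E : Type*} [NormedAddCommGroup E] [InnerProductSpace ℝ E]
    (P : Set E) (y : E) : Set E :=
  {v | ∀ p ∈ P, (inner ℝ v (p - y) : ℝ) ≤ 0}

theorem exists_strictMono_forall_eq_of_finite_range {α : Type*} {f : ℕ → α}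
    (hf : (range f).Finite) : ∃ a, ∃ φ : ℕ → ℕ, StrictMono φ ∧ ∀ n, f (φ n) = a := by
  have := hf.to_subtype
  obtain ⟨a, ha⟩ := Finite.exists_infinite_fiber (rangeFactorization f)
  have hfreq : ∃ᶠ n in atTop, rangeFactorization f n = a :=
    Nat.frequently_atTop_iff_infinite.2 (Set.infinite_coe_iff.1 ha)
  obtain ⟨φ, hφ, hφa⟩ := extraction_of_frequently_atTop hfreq
  exact ⟨a, φ, hφ, fun n => congrArg Subtype.val (hφa n)⟩

section NormalCone

variable {E : Type*} [NormedAddCommGroup E] [InnerProductSpace ℝ E] {P : Set E}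

theorem mem_convNormal_of_tendsto {ι : Type*} {l : Filter ι} [l.NeBot] {v : ι → E} {x : ι → E}
    {v₀ x₀ : E} (hv : Tendsto v l (𝓝 v₀)) (hx : Tendsto x l (𝓝 x₀))
    (h : ∀ᶠ i in l, v i ∈ convNormal P (x i)) : v₀ ∈ convNormal P x₀ := fun p hp =>
  le_of_tendsto (hv.inner (tendsto_const_nhds.sub hx)) (h.mono fun _ hi => hi p hp)

theorem inner_sub_eq_zero_of_mem_convNormal {v x y : E} (hx : x ∈ P) (hy : y ∈ P)
    (hvx : v ∈ convNormal P x) (hvy : v ∈ convNormal P y) : (inner ℝ v (x - y) : ℝ) = 0 := by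
  have hle : (inner ℝ v (x - y) : ℝ) ≤ 0 := hvy x hx
  have hge : -(inner ℝ v (x - y) : ℝ) ≤ 0 := by
    rw [← inner_neg_right, neg_sub]
    exact hvx y hy
  linarith

end NormalCone

theorem stmt1_general {s : ℕ} (P : Set (EuclideanSpace ℝ (Fin s)))
    (hPc : IsClosed P)
    (hfin : ((fun y => convNormal P y) '' P).Finite)
    (y : ℕ → EuclideanSpace ℝ (Fin s)) (ybar : EuclideanSpace ℝ (Fin s))
    (hy : ∀ k, y k ∈ P) (hyt : Tendsto y atTop (𝓝 ybar))
    (lam : ℕ → EuclideanSpace ℝ (Fin s)) (lambar : EuclideanSpace ℝ (Fin s))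
    (hlam : ∀ k, lam k ∈ convNormal P (y k)) (hlamt : Tendsto lam atTop (𝓝 lambar)) :
    ∃ K : ℕ → ℕ, StrictMono K ∧ ∀ k, (inner ℝ lambar (y (K k) - ybar) : ℝ) = 0 := by
  have hybar : ybar ∈ P := hPc.mem_of_tendsto hyt (.of_forall hy)
  have hrange : (range fun k => convNormal P (y k)).Finite :=
    hfin.subset (range_subset_iff.2 fun k => mem_image_of_mem _ (hy k))
  obtain ⟨C, K, hK, hKC⟩ := exists_strictMono_forall_eq_of_finite_range hrange
  have hlambar_K : ∀ k, lambar ∈ convNormal P (y (K k)) := fun k =>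
    mem_convNormal_of_tendsto (hlamt.comp hK.tendsto_atTop) tendsto_const_nhds
      (.of_forall fun m => by simpa only [Function.comp_apply, hKC] using hlam (K m))
  have hlambar : lambar ∈ convNormal P ybar :=
    mem_convNormal_of_tendsto tendsto_const_nhds (hyt.comp hK.tendsto_atTop) (.of_forall hlambar_K)
  exact ⟨K, hK, fun k => inner_sub_eq_zero_of_mem_convNormal (hy (K k)) hybar (hlambar_K k) hlambar⟩

theorem stmt1 {s : ℕ} (P : Set (EuclideanSpace ℝ (Fin s)))
    (hPc : IsClosed P) (hPconv : Convex ℝ P)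
    (hfin : ((fun y => convNormal P y) '' P).Finite)
    (y : ℕ → EuclideanSpace ℝ (Fin s)) (ybar : EuclideanSpace ℝ (Fin s))
    (hy : ∀ k, y k ∈ P) (hyt : Tendsto y atTop (𝓝 ybar))
    (lam : ℕ → EuclideanSpace ℝ (Fin s)) (lambar : EuclideanSpace ℝ (Fin s))
    (hlam : ∀ k, lam k ∈ convNormal P (y k)) (hlamt : Tendsto lam atTop (𝓝 lambar)) :
    ∃ K : ℕ → ℕ, StrictMono K ∧ ∀ k, (inner ℝ lambar (y (K k) - ybar) : ℝ) = 0 :=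
  stmt1_general P hPc hfin y ybar hy hyt lam lambar hlam hlamt
end
end

section
/- Let Γ = {y ∈ ℝ² : y₂ ≥ |y₁|^{3/2}}, F : ℝ → ℝ² defined by F(x) = (x, x²), and x̄ = 0. Then the metric subregularity constraint qualification fails at x̄: there is no neighborhood U of 0 and κ > 0 such that d_{F^{-1}(Γ)}(x) ≤ κ d_Γ(F(x)) for all x ∈ U. Specifically, for x ≠ 0 near 0, d_{F^{-1}(Γ)}(x) = |x| while d_Γ(F(x)) ≤ |x|^{3/2}. -/
open Set Filter Topology Metric

noncomputable section

/-- The vector `(a, b)` in the Euclidean plane. -/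
def v2 (a b : ℝ) : EuclideanSpace ℝ (Fin 2) :=
  (WithLp.equiv 2 (Fin 2 → ℝ)).symm ![a, b]

/-- `Γ = {y ∈ ℝ² : y₂ ≥ |y₁|^{3/2}}`. -/
def Gamma12 : Set (EuclideanSpace ℝ (Fin 2)) :=
  {y | |y 0| ^ ((3 : ℝ) / 2) ≤ y 1}

/-- `F(x) = (x, x²)`. -/
def F12 (x : ℝ) : EuclideanSpace ℝ (Fin 2) := v2 x (x ^ 2)

lemma v2_apply0 (a b : ℝ) : (v2 a b) 0 = a := rfl
lemma v2_apply1 (a b : ℝ) : (v2 a b) 1 = b := rfl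

lemma mem_S_iff (x : ℝ) : x ∈ F12 ⁻¹' Gamma12 ↔ |x| ^ ((3:ℝ)/2) ≤ x ^ 2 := Iff.rfl

lemma abs_rpow_two (x : ℝ) : x ^ 2 = |x| ^ ((2:ℝ)) := by
  rw [show ((2:ℝ)) = ((2:ℕ):ℝ) by norm_num, Real.rpow_natCast, sq_abs]

lemma zero_mem_S : (0:ℝ) ∈ F12 ⁻¹' Gamma12 := by
  rw [mem_S_iff]
  simp [Real.zero_rpow]

lemma one_le_of_mem {x : ℝ} (hx : x ∈ F12 ⁻¹' Gamma12) (hx0 : x ≠ 0) : 1 ≤ |x| := by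
  by_contra h
  push_neg at h
  have h0 : 0 < |x| := abs_pos.mpr hx0
  have := (mem_S_iff x).mp hx
  rw [abs_rpow_two] at this
  have hlt : |x| ^ ((2:ℝ)) < |x| ^ ((3:ℝ)/2) :=
    Real.rpow_lt_rpow_of_exponent_gt h0 h (by norm_num)
  linarith

lemma infDist_S {x : ℝ} (hx : |x| < 1/2) :
    Metric.infDist x (F12 ⁻¹' Gamma12) = |x| := by
  apply le_antisymm
  · have := Metric.infDist_le_dist_of_mem (x := x) zero_mem_S
    simpa using this
  · by_contra h
    push_neg at h
    obtain ⟨y, hy, hdy⟩ := (Metric.infDist_lt_iff ⟨0, zero_mem_S⟩).mp h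
    rcases eq_or_ne y 0 with rfl | hy0
    · simp [Real.dist_eq] at hdy
    · have h1 : 1 ≤ |y| := one_le_of_mem hy hy0
      have h2 : |y| - |x| ≤ |x - y| := by
        have := abs_sub_abs_le_abs_sub y x
        rw [abs_sub_comm] at this
        linarith
      rw [Real.dist_eq] at hdy
      linarith

lemma dist_upper {x : ℝ} (hx : |x| ≤ 1) :
    Metric.infDist (F12 x) Gamma12 ≤ |x| ^ ((3:ℝ)/2) := by
  have hmem : v2 x (|x| ^ ((3:ℝ)/2)) ∈ Gamma12 := by
    show |(v2 x (|x| ^ ((3:ℝ)/2))) 0| ^ ((3:ℝ)/2) ≤ (v2 x (|x| ^ ((3:ℝ)/2))) 1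
    rw [v2_apply0, v2_apply1]
  refine le_trans (Metric.infDist_le_dist_of_mem hmem) ?_
  have hd : dist (F12 x) (v2 x (|x| ^ ((3:ℝ)/2))) = |x ^ 2 - |x| ^ ((3:ℝ)/2)| := by
    rw [EuclideanSpace.dist_eq]
    have e0 : (F12 x) 0 = x := rfl
    have e1 : (F12 x) 1 = x ^ 2 := rfl
    rw [Fin.sum_univ_two, e0, e1, v2_apply0, v2_apply1]
    simp [Real.dist_eq, Real.sqrt_sq_eq_abs]
  rw [hd]
  have h2 : x ^ 2 ≤ |x| ^ ((3:ℝ)/2) := by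
    rw [abs_rpow_two]
    exact Real.rpow_le_rpow_of_exponent_ge' (abs_nonneg x) hx (by norm_num) (by norm_num)
  have h3 : (0:ℝ) ≤ x ^ 2 := sq_nonneg x
  rw [abs_sub_comm, abs_of_nonneg (by linarith)]
  linarith

theorem stmt12 :
    (∀ᶠ x in 𝓝 (0 : ℝ), x ≠ 0 →
      Metric.infDist x (F12 ⁻¹' Gamma12) = |x| ∧
      Metric.infDist (F12 x) Gamma12 ≤ |x| ^ ((3 : ℝ) / 2)) ∧
    ¬ ∃ U ∈ 𝓝 (0 : ℝ), ∃ κ > (0 : ℝ), ∀ x ∈ U,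
        Metric.infDist x (F12 ⁻¹' Gamma12) ≤ κ * Metric.infDist (F12 x) Gamma12 := by
  constructor
  · filter_upwards [Metric.ball_mem_nhds (0:ℝ) (by norm_num : (0:ℝ) < 1/2)] with x hx _
    rw [Metric.mem_ball, Real.dist_eq, sub_zero] at hx
    exact ⟨infDist_S hx, dist_upper (by linarith)⟩
  · rintro ⟨U, hU, κ, hκ, h⟩
    obtain ⟨ε, hε, hball⟩ := Metric.mem_nhds_iff.mp hU
    set x := min (ε/2) (min (1/4) (κ⁻¹^2/2)) with hxdef
    have hκi : (0:ℝ) < κ⁻¹ := inv_pos.mpr hκ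
    have hx0 : 0 < x := by positivity
    have hxε : x < ε := lt_of_le_of_lt (min_le_left _ _) (by linarith)
    have hx4 : x ≤ 1/4 := le_trans (min_le_right _ _) (min_le_left _ _)
    have hxκ : x < κ⁻¹^2 := lt_of_le_of_lt (le_trans (min_le_right _ _) (min_le_right _ _)) (by nlinarith)
    have hxU : x ∈ U := hball (by simpa [Real.dist_eq, abs_of_pos hx0] using hxε)
    have habs : |x| = x := abs_of_pos hx0
    have h1 : Metric.infDist x (F12 ⁻¹' Gamma12) = x := by
      rw [infDist_S (by rw [habs]; linarith)]; exact habs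
    have h2 : Metric.infDist (F12 x) Gamma12 ≤ x ^ ((3:ℝ)/2) := by
      have := dist_upper (x := x) (by rw [habs]; linarith)
      rwa [habs] at this
    have hchain : x ≤ κ * x ^ ((3:ℝ)/2) := by
      have := h x hxU
      rw [h1] at this
      calc x ≤ κ * Metric.infDist (F12 x) Gamma12 := this
        _ ≤ κ * x ^ ((3:ℝ)/2) := by nlinarith [Metric.infDist_nonneg (x := F12 x) (s := Gamma12)]
    have hsplit : x ^ ((3:ℝ)/2) = x * x ^ ((1:ℝ)/2) := by
      rw [← Real.rpow_one_add' (le_of_lt hx0) (by norm_num)]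
      norm_num
    have hsq : x ^ ((1:ℝ)/2) < κ⁻¹ := by
      rw [← Real.sqrt_eq_rpow]
      exact (Real.sqrt_lt' hκi).mpr (by rwa [inv_pow] at hxκ ⊢)
    rw [hsplit] at hchain
    have : κ * x ^ ((1:ℝ)/2) < 1 := by
      have := mul_lt_mul_of_pos_left hsq hκ
      rwa [mul_inv_cancel₀ (ne_of_gt hκ)] at this
    nlinarith [Real.rpow_nonneg (le_of_lt hx0) ((1:ℝ)/2)]
end
end

section
/- Ekeland-based violation lemma: Let F : ℝ^n → ℝ^d be continuously differentiable, Γ ⊆ ℝ^d closed, X = F^{-1}(Γ), and let x̄ ∈ X be such that MSCQ fails at x̄. Then there exist sequences x_k → x̄ with x_k ∉ X, ξ_k ∈ ∂(d_Γ ∘ F)(x_k) with ξ_k → 0, and a unit vector u ∈ ℝ^n such that (x_k − x̄)/‖x_k − x̄‖ → u, and for any choice y_k ∈ P_Γ(F(x_k)) one has (y_k − F(x̄))/‖x_k − x̄‖ → ∇F(x̄)u; in particular ∇F(x̄)u ∈ T_Γ(F(x̄)). -/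
open Set Filter Topology Metric

noncomputable section

/-- The (Bouligand) tangent cone to `C` at `z`. -/
def tangentConeB {E : Type*} [NormedAddCommGroup E] [NormedSpace ℝ E]
    (C : Set E) (z : E) : Set E :=
  {d | ∃ (dk : ℕ → E) (tk : ℕ → ℝ), Tendsto dk atTop (𝓝 d) ∧
    Tendsto tk atTop (𝓝 0) ∧ (∀ k, 0 < tk k) ∧ ∀ k, z + tk k • dk k ∈ C}

/-- The regular (Fréchet) subdifferential of `f` at `x`. -/
def frechetSubdiff {E : Type*} [NormedAddCommGroup E] [InnerProductSpace ℝ E]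
    (f : E → ℝ) (x : E) : Set E :=
  {v | ∀ ε > (0 : ℝ), ∀ᶠ y in 𝓝 x, -(ε * ‖y - x‖) ≤ f y - f x - (inner ℝ v (y - x) : ℝ)}

/-- The limiting (Mordukhovich) subdifferential of `f` at `x`. -/
def limSubdiff {E : Type*} [NormedAddCommGroup E] [InnerProductSpace ℝ E]
    (f : E → ℝ) (x : E) : Set E :=
  {v | ∃ (xk vk : ℕ → E), Tendsto xk atTop (𝓝 x) ∧ Tendsto vk atTop (𝓝 v) ∧
    Tendsto (fun k => f (xk k)) atTop (𝓝 (f x)) ∧ ∀ k, vk k ∈ frechetSubdiff f (xk k)}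

/-!
Failure of MSCQ yields points `z_k → x̄` with `(k + 1) f(z_k) < d_X(z_k)`, where
`f = d_Γ ∘ F ≥ 0` vanishes exactly on `X`. Each `z_k` is an `f(z_k)`-minimizer of `f`;
minimizing `f` plus a quadratic penalty centred at `z_k` over the ball of radius `d_X(z_k) / 2`
(compactness of balls replaces Ekeland's principle) gives `x_k ∉ X` with a Fréchet subgradient
of norm `O(1 / k)`, the negative gradient of the penalty, and with `f(x_k) = o(‖x_k - x̄‖)`.
Along a subsequence the directions of `x_k - x̄` converge to a unit vector `u`. A projection
`y_k` of `F(x_k)` onto `Γ` satisfies `‖y_k - F(x_k)‖ = f(x_k)`, so by differentiability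
`y_k = F(x̄) + ‖x_k - x̄‖ ∇F(x̄) u + o(‖x_k - x̄‖)`, which is also a tangent-cone certificate.
-/

theorem exists_seq_of_not_errorBound {X : Type*} [PseudoMetricSpace X] {S : Set X}
    {g : X → ℝ} {x₀ : X} (h : ¬ ∃ U ∈ 𝓝 x₀, ∃ κ > (0 : ℝ), ∀ x ∈ U, infDist x S ≤ κ * g x) :
    ∃ z : ℕ → X, Tendsto z atTop (𝓝 x₀) ∧ ∀ k : ℕ, ((k : ℝ) + 1) * g (z k) < infDist (z k) S := by
  push Not at h
  choose z hz hlt using fun k : ℕ =>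
    h (ball x₀ (1 / ((k : ℝ) + 1))) (ball_mem_nhds _ (by positivity)) ((k : ℝ) + 1) (by positivity)
  refine ⟨z, tendsto_iff_dist_tendsto_zero.2 ?_, hlt⟩
  exact squeeze_zero (fun _ => dist_nonneg) (fun k => (hz k).le)
    tendsto_one_div_add_atTop_nhds_zero_nat

section

variable {E : Type*} [NormedAddCommGroup E] [InnerProductSpace ℝ E]

theorem frechetSubdiff_subset_limSubdiff (f : E → ℝ) (x : E) :
    frechetSubdiff f x ⊆ limSubdiff f x := fun v hv =>
  ⟨fun _ => x, fun _ => v, tendsto_const_nhds, tendsto_const_nhds, tendsto_const_nhds,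
    fun _ => hv⟩

theorem hasGradientAt_const_mul_norm_sub_sq [CompleteSpace E] (c : ℝ) (z x : E) :
    HasGradientAt (fun y => c * ‖y - z‖ ^ 2) ((2 * c) • (x - z)) x := by
  rw [hasGradientAt_iff_hasFDerivAt]
  have hd := ((hasStrictFDerivAt_norm_sq (x - z)).hasFDerivAt.comp x
    ((hasFDerivAt_id x).sub_const z)).const_mul c
  refine hd.congr_fderiv (ContinuousLinearMap.ext fun w => ?_)
  simp [InnerProductSpace.toDual_apply_apply]
  ring

theorem IsLocalMin.neg_mem_frechetSubdiff_of_add [CompleteSpace E] {f h : E → ℝ} {x g : E}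
    (hmin : IsLocalMin (fun y => f y + h y) x) (hg : HasGradientAt h g x) :
    -g ∈ frechetSubdiff f x := by
  intro ε hε
  filter_upwards [hmin, (hasGradientAt_iff_isLittleO.1 hg).bound hε] with y hy hhy
  rw [inner_neg_left]
  linarith [(abs_le.1 (Real.norm_eq_abs _ ▸ hhy)).2]

theorem exists_mem_frechetSubdiff_of_le_add [ProperSpace E] {f : E → ℝ}
    (hf : LowerSemicontinuous f) {z : E} {ε R : ℝ} (hε : 0 < ε) (hR : 0 < R)
    (hz : ∀ y, f z ≤ f y + ε) :
    ∃ x, dist x z < R ∧ f x ≤ f z ∧ ∃ ξ ∈ frechetSubdiff f x, ‖ξ‖ ≤ 4 * ε / R := by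
  -- `c` is chosen so that `c * ‖x - z‖ ^ 2 ≤ ε` forces `‖x - z‖ < R`.
  set c := 2 * ε / R ^ 2
  have hc : 0 < c := by positivity
  have hpen : Continuous fun y => c * ‖y - z‖ ^ 2 := by fun_prop
  obtain ⟨x, hxR, hmin⟩ := LowerSemicontinuousOn.exists_isMinOn
    ⟨z, mem_closedBall_self hR.le⟩ (isCompact_closedBall z R)
    ((hf.add hpen.lowerSemicontinuous).lowerSemicontinuousOn _)
  have hxmin : f x + c * ‖x - z‖ ^ 2 ≤ f z := by simpa using hmin (mem_closedBall_self hR.le)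
  have hxz : ‖x - z‖ < R := by
    by_contra! hRx
    have hcR : c * R ^ 2 = 2 * ε := div_mul_cancel₀ _ (by positivity)
    have : c * R ^ 2 ≤ c * ‖x - z‖ ^ 2 := by gcongr
    linarith [hz x]
  refine ⟨x, by rwa [dist_eq_norm], by linarith [show 0 ≤ c * ‖x - z‖ ^ 2 by positivity], ?_⟩
  refine ⟨_, (hmin.isLocalMin (closedBall_mem_nhds_of_mem (by rwa [mem_ball, dist_eq_norm]))
    ).neg_mem_frechetSubdiff_of_add (hasGradientAt_const_mul_norm_sub_sq c z x), ?_⟩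
  calc ‖-((2 * c) • (x - z))‖ = 2 * c * ‖x - z‖ := by
        rw [norm_neg, norm_smul, Real.norm_of_nonneg (by positivity)]
    _ ≤ 2 * c * R := by gcongr
    _ = 4 * ε / R := by simp only [c]; field_simp; ring

theorem exists_mem_frechetSubdiff_of_mul_lt_infDist [ProperSpace E] {f : E → ℝ} {x₀ : E}
    (hf : LowerSemicontinuous f) (hf0 : ∀ x, 0 ≤ f x) (hx₀ : f x₀ = 0) {z : E} {κ : ℝ}
    (hκ : 0 < κ) (hz : κ * f z < infDist z {x | f x = 0}) :
    ∃ x, dist x x₀ ≤ 2 * dist z x₀ ∧ 0 < f x ∧ κ * f x ≤ 2 * ‖x - x₀‖ ∧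
      ∃ ξ ∈ frechetSubdiff f x, κ * ‖ξ‖ ≤ 8 := by
  set r := infDist z {x | f x = 0}
  have hr : 0 < r := (mul_nonneg hκ.le (hf0 z)).trans_lt hz
  have hfz : 0 < f z := (hf0 z).lt_of_ne fun h => hr.ne' (infDist_zero_of_mem h.symm)
  obtain ⟨x, hxz, hfx, ξ, hξ, hξn⟩ := exists_mem_frechetSubdiff_of_le_add hf hfz (half_pos hr)
    (fun y => le_add_of_nonneg_left (hf0 y))
  have hrz : r ≤ dist z x₀ := infDist_le_dist_of_mem hx₀
  have hrx : r ≤ infDist x {x | f x = 0} + dist z x := infDist_le_infDist_add_dist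
  have hx₀x : infDist x {x | f x = 0} ≤ ‖x - x₀‖ := dist_eq_norm x x₀ ▸ infDist_le_dist_of_mem hx₀
  rw [dist_comm] at hrx
  refine ⟨x, ?_, ?_, ?_, ξ, hξ, ?_⟩
  · linarith [dist_triangle x z x₀]
  · refine (hf0 x).lt_of_ne fun h => ?_
    linarith [infDist_zero_of_mem (s := {x | f x = 0}) h.symm]
  · calc κ * f x ≤ κ * f z := by gcongr
      _ ≤ 2 * ‖x - x₀‖ := by linarith
  · calc κ * ‖ξ‖ ≤ κ * (4 * f z / (r / 2)) := by gcongr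
      _ = 8 * (κ * f z) / r := by field_simp; ring
      _ ≤ 8 := by rw [div_le_iff₀ hr]; linarith

theorem exists_seq_mem_frechetSubdiff_of_not_errorBound [ProperSpace E] {f : E → ℝ} {x₀ : E}
    (hf : LowerSemicontinuous f) (hf0 : ∀ x, 0 ≤ f x) (hx₀ : f x₀ = 0)
    (h : ¬ ∃ U ∈ 𝓝 x₀, ∃ κ > (0 : ℝ), ∀ x ∈ U, infDist x {x | f x = 0} ≤ κ * f x) :
    ∃ x ξ : ℕ → E, Tendsto x atTop (𝓝 x₀) ∧ (∀ k, 0 < f (x k)) ∧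
      (∀ k, ξ k ∈ frechetSubdiff f (x k)) ∧ Tendsto ξ atTop (𝓝 0) ∧
      (fun k => f (x k)) =o[atTop] (fun k => x k - x₀) := by
  obtain ⟨z, hz, hzS⟩ := exists_seq_of_not_errorBound h
  choose x hxz hfx hfxκ ξ hξ hξκ using fun k : ℕ =>
    exists_mem_frechetSubdiff_of_mul_lt_infDist hf hf0 hx₀ (by positivity) (hzS k)
  have hinv : Tendsto (fun k : ℕ => ((k : ℝ) + 1)⁻¹) atTop (𝓝 0) := by
    simpa using tendsto_one_div_add_atTop_nhds_zero_nat (𝕜 := ℝ)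
  refine ⟨x, ξ, ?_, hfx, hξ, ?_, ?_⟩
  · refine tendsto_iff_dist_tendsto_zero.2 (squeeze_zero (fun _ => dist_nonneg) hxz ?_)
    simpa using (tendsto_iff_dist_tendsto_zero.1 hz).const_mul 2
  · refine squeeze_zero_norm (fun k => ?_) (by simpa using hinv.const_mul 8)
    rw [← div_eq_mul_inv, le_div_iff₀' (by positivity)]
    exact hξκ k
  · refine Asymptotics.isLittleO_iff.2 fun c hc => ?_
    have h2inv : Tendsto (fun k : ℕ => 2 * ((k : ℝ) + 1)⁻¹) atTop (𝓝 0) := by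
      simpa using hinv.const_mul 2
    filter_upwards [h2inv.eventually (ge_mem_nhds hc)] with k hk
    rw [Real.norm_of_nonneg (hf0 _)]
    calc f (x k) ≤ 2 * ((k : ℝ) + 1)⁻¹ * ‖x k - x₀‖ := by
          rw [mul_right_comm, ← div_eq_mul_inv, le_div_iff₀' (by positivity)]
          exact hfxκ k
      _ ≤ c * ‖x k - x₀‖ := by gcongr

end

theorem exists_subseq_tendsto_inv_norm_smul {E : Type*} [NormedAddCommGroup E]
    [NormedSpace ℝ E] [ProperSpace E] {v : ℕ → E} (hv : ∀ k, v k ≠ 0) :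
    ∃ u, ‖u‖ = 1 ∧ ∃ φ : ℕ → ℕ, StrictMono φ ∧
      Tendsto (fun k => ‖v (φ k)‖⁻¹ • v (φ k)) atTop (𝓝 u) := by
  obtain ⟨u, hu, φ, hφ, h⟩ := (isCompact_sphere (0 : E) 1).tendsto_subseq
    (x := fun k => ‖v k‖⁻¹ • v k) fun k => by simp [norm_smul, hv k]
  exact ⟨u, by simpa using hu, φ, hφ, h⟩

theorem HasFDerivAt.tendsto_inv_norm_smul_sub {E F α : Type*} [NormedAddCommGroup E]
    [NormedSpace ℝ E] [NormedAddCommGroup F] [NormedSpace ℝ F] {G : E → F} {A : E →L[ℝ] F}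
    {x₀ u : E} (hG : HasFDerivAt G A x₀) {l : Filter α} {x : α → E} {y : α → F}
    (hx : Tendsto x l (𝓝 x₀)) (hu : Tendsto (fun k => ‖x k - x₀‖⁻¹ • (x k - x₀)) l (𝓝 u))
    (hy : (fun k => y k - G (x k)) =o[l] (fun k => x k - x₀)) :
    Tendsto (fun k => ‖x k - x₀‖⁻¹ • (y k - G x₀)) l (𝓝 (A u)) := by
  have hrem : (fun k => y k - G x₀ - A (x k - x₀)) =o[l] (fun k => x k - x₀) :=
    (hy.add (hG.isLittleO.comp_tendsto hx)).congr_left fun k => by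
      simp only [Function.comp_apply]; abel
  have hlim := hrem.norm_right.tendsto_inv_smul_nhds_zero.add ((A.continuous.tendsto u).comp hu)
  rw [zero_add] at hlim
  refine hlim.congr fun k => ?_
  rw [Function.comp_apply, map_smul, ← smul_add, sub_add_cancel]

theorem mem_tangentConeB_of_tendsto {E : Type*} [NormedAddCommGroup E] [NormedSpace ℝ E]
    {C : Set E} {z v : E} {t : ℕ → ℝ} {y : ℕ → E} (hy : ∀ k, y k ∈ C) (ht : ∀ k, 0 < t k)
    (ht0 : Tendsto t atTop (𝓝 0)) (hv : Tendsto (fun k => (t k)⁻¹ • (y k - z)) atTop (𝓝 v)) :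
    v ∈ tangentConeB C z :=
  ⟨_, t, hv, ht0, ht, fun k => by rw [smul_inv_smul₀ (ht k).ne', add_sub_cancel]; exact hy k⟩

theorem stmt18 {n d : ℕ}
    (F : EuclideanSpace ℝ (Fin n) → EuclideanSpace ℝ (Fin d))
    (hF : ContDiff ℝ 1 F)
    (Γ : Set (EuclideanSpace ℝ (Fin d))) (hΓ : IsClosed Γ)
    (xbar : EuclideanSpace ℝ (Fin n)) (hxbar : F xbar ∈ Γ)
    -- MSCQ fails at `x̄`
    (hMSCQ : ¬ ∃ U ∈ 𝓝 xbar, ∃ κ > (0 : ℝ), ∀ x ∈ U,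
        Metric.infDist x (F ⁻¹' Γ) ≤ κ * Metric.infDist (F x) Γ) :
    ∃ (xk ξk : ℕ → EuclideanSpace ℝ (Fin n)) (u : EuclideanSpace ℝ (Fin n)),
      ‖u‖ = 1 ∧
      Tendsto xk atTop (𝓝 xbar) ∧
      (∀ k, xk k ∉ F ⁻¹' Γ) ∧
      (∀ k, ξk k ∈ limSubdiff (fun x => Metric.infDist (F x) Γ) (xk k)) ∧
      Tendsto ξk atTop (𝓝 0) ∧
      Tendsto (fun k => ‖xk k - xbar‖⁻¹ • (xk k - xbar)) atTop (𝓝 u) ∧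
      (∀ yk : ℕ → EuclideanSpace ℝ (Fin d),
        (∀ k, yk k ∈ Γ ∧ dist (F (xk k)) (yk k) = Metric.infDist (F (xk k)) Γ) →
        Tendsto (fun k => ‖xk k - xbar‖⁻¹ • (yk k - F xbar)) atTop
          (𝓝 (fderiv ℝ F xbar u))) ∧
      fderiv ℝ F xbar u ∈ tangentConeB Γ (F xbar) := by
  have hΓne : Γ.Nonempty := ⟨F xbar, hxbar⟩
  have hX : F ⁻¹' Γ = {x | infDist (F x) Γ = 0} := Set.ext fun x => hΓ.mem_iff_infDist_zero hΓne
  obtain ⟨x, ξ, hx, hfx, hξ, hξ0, hfo⟩ := exists_seq_mem_frechetSubdiff_of_not_errorBound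
    (f := fun x => infDist (F x) Γ)
    ((continuous_infDist_pt Γ).comp hF.continuous).lowerSemicontinuous
    (fun _ => infDist_nonneg) (infDist_zero_of_mem hxbar) (hX ▸ hMSCQ)
  have hxne : ∀ k, x k - xbar ≠ 0 := fun k h =>
    (hfx k).ne' (sub_eq_zero.1 h ▸ infDist_zero_of_mem hxbar)
  obtain ⟨u, hu, φ, hφ, hdir⟩ := exists_subseq_tendsto_inv_norm_smul hxne
  have hxφ := hx.comp hφ.tendsto_atTop
  have hproj : ∀ y : ℕ → EuclideanSpace ℝ (Fin d),
      (∀ k, y k ∈ Γ ∧ dist (F (x (φ k))) (y k) = infDist (F (x (φ k))) Γ) →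
      Tendsto (fun k => ‖x (φ k) - xbar‖⁻¹ • (y k - F xbar)) atTop
        (𝓝 (fderiv ℝ F xbar u)) := fun y hy =>
    (hF.differentiable one_ne_zero xbar).hasFDerivAt.tendsto_inv_norm_smul_sub hxφ hdir
      (Asymptotics.isLittleO_norm_left.1 ((hfo.comp_tendsto hφ.tendsto_atTop).congr_left
        fun k => by rw [Function.comp_apply, ← (hy k).2, dist_eq_norm']))
  choose y hyΓ hyd using fun k => hΓ.exists_infDist_eq_dist hΓne (F (x (φ k)))
  refine ⟨x ∘ φ, ξ ∘ φ, u, hu, hxφ, fun k => hX ▸ (hfx (φ k)).ne',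
    fun k => frechetSubdiff_subset_limSubdiff _ _ (hξ (φ k)), hξ0.comp hφ.tendsto_atTop, hdir,
    hproj, ?_⟩
  exact mem_tangentConeB_of_tendsto hyΓ (fun k => norm_pos_iff.2 (hxne _))
    (tendsto_iff_norm_sub_tendsto_zero.1 hxφ) (hproj y fun k => ⟨hyΓ k, (hyd k).symm⟩)
end
end
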